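/- Let T > 0 and 0 < η < T, and suppose 0 < α < 2T/η² and 0 ≤ β < (2T − αη²)/(αη² − 2η + 2T). Set γ = min{ η/T, α(β+1)η²/(2T), α(β+1)η(T−η)/(2T − α(β+1)η²) }. If y : [0,T] → [0,∞) is continuous and u is a twice continuously differentiable function on [0,T] satisfying u''(t) + y(t) = 0 on (0,T), u(0) = β u(η) and u(T) = α ∫₀^η u(s) ds, then min_{t ∈ [η,T]} u(t) ≥ γ · max_{t ∈ [0,T]} |u(t)|. -/

import Mathlib

/-!
Since `u'' = -y ≤ 0`, `u` is concave on `[0, T]`. Bounding `∫₀^η u` below by the chord of `u` over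
`[0, η]` and above by the secant through `η` and `T`, the boundary conditions give
`α η (β + 1) u(η) ≤ 2 u(T)` and `(2T - 2η + αη²) u(T) ≤ α η (2T - η) u(η)`; the bound on `β` makes
these compatible only if `u(η) ≥ 0`, so `u(0), u(T) ≥ 0` and, by concavity, `u ≥ 0`.
On `[η, T]` a concave `u` is at least `min (u η) (u T)`, and comparing with a maximum point `σ`
of `u` (to the right or to the left of `η`) bounds both values below by `γ ‖u‖`.
-/

open Set MeasureTheory

theorem ConcaveOn.sub_mul_add_sub_mul_le {s : Set ℝ} {f : ℝ → ℝ} (hf : ConcaveOn ℝ s f)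
    {a b x : ℝ} (ha : a ∈ s) (hb : b ∈ s) (hax : a ≤ x) (hxb : x ≤ b) :
    (b - x) * f a + (x - a) * f b ≤ (b - a) * f x := by
  rcases (hax.trans hxb).eq_or_lt with rfl | hab
  · obtain rfl : x = a := le_antisymm hxb hax
    simp
  have hba : 0 < b - a := sub_pos.2 hab
  have hcomb := hf.2 ha hb (div_nonneg (sub_nonneg.2 hxb) hba.le)
    (div_nonneg (sub_nonneg.2 hax) hba.le) (by field_simp; ring)
  have hx : (b - x) / (b - a) * a + (x - a) / (b - a) * b = x := by field_simp; ring
  simp only [smul_eq_mul, hx] at hcomb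
  rw [div_mul_eq_mul_div, div_mul_eq_mul_div, ← add_div, div_le_iff₀ hba] at hcomb
  linarith

theorem concaveOn_Icc_of_hasDerivWithinAt2_nonpos {f f' f'' : ℝ → ℝ} {a b : ℝ}
    (hf : ∀ x ∈ Icc a b, HasDerivWithinAt f (f' x) (Icc a b) x)
    (hf' : ∀ x ∈ Ioo a b, HasDerivWithinAt f' (f'' x) (Icc a b) x)
    (hf'' : ∀ x ∈ Ioo a b, f'' x ≤ 0) : ConcaveOn ℝ (Icc a b) f := by
  refine concaveOn_of_hasDerivWithinAt2_nonpos (f' := f') (f'' := f'') (convex_Icc a b)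
    (fun x hx => (hf x hx).continuousWithinAt) ?_ ?_ ?_ <;> simp only [interior_Icc]
  · exact fun x hx => (hf x (Ioo_subset_Icc_self hx)).mono Ioo_subset_Icc_self
  · exact fun x hx => (hf' x hx).mono Ioo_subset_Icc_self
  · exact hf''

theorem intervalIntegral.integral_const_add_mul_id (a b p q : ℝ) :
    ∫ x in a..b, (p + q * x) = (b - a) * (p + q * (a + b) / 2) := by
  rw [integral_add intervalIntegrable_const (intervalIntegrable_id.const_mul q),
    integral_const_mul, integral_id, integral_const, smul_eq_mul]
  ring

theorem ConcaveOn.sub_mul_add_div_two_le_integral {f : ℝ → ℝ} {a b : ℝ}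
    (hf : ConcaveOn ℝ (Icc a b) f) (hab : a ≤ b) (hfi : IntervalIntegrable f volume a b) :
    (b - a) * ((f a + f b) / 2) ≤ ∫ x in a..b, f x := by
  rcases hab.eq_or_lt with rfl | hab
  · simp
  have hba : 0 < b - a := sub_pos.2 hab
  have hchord : ∀ x ∈ Icc a b, (b * f a - a * f b) + (f b - f a) * x ≤ (b - a) * f x := by
    intro x hx
    linarith [hf.sub_mul_add_sub_mul_le (left_mem_Icc.2 hab.le) (right_mem_Icc.2 hab.le) hx.1 hx.2]
  have hmono := intervalIntegral.integral_mono_on hab.le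
    (intervalIntegrable_const.add (intervalIntegral.intervalIntegrable_id.const_mul _))
    (hfi.const_mul _) hchord
  rw [intervalIntegral.integral_const_add_mul_id, intervalIntegral.integral_const_mul] at hmono
  refine le_of_mul_le_mul_left (le_of_eq_of_le ?_ hmono) hba
  ring

theorem ConcaveOn.sub_mul_integral_le {f : ℝ → ℝ} {a b c : ℝ}
    (hf : ConcaveOn ℝ (Icc a c) f) (hab : a ≤ b) (hbc : b ≤ c)
    (hfi : IntervalIntegrable f volume a b) :
    (c - b) * ∫ x in a..b, f x ≤ (b - a) * ((c - (a + b) / 2) * f b - (b - a) / 2 * f c) := by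
  have hsecant : ∀ x ∈ Icc a b, (c - b) * f x ≤ (c * f b - b * f c) + (f c - f b) * x := by
    intro x hx
    linarith [hf.sub_mul_add_sub_mul_le ⟨hx.1, hx.2.trans hbc⟩ ⟨hab.trans hbc, le_rfl⟩ hx.2 hbc]
  have hmono := intervalIntegral.integral_mono_on hab (hfi.const_mul _)
    (intervalIntegrable_const.add (intervalIntegral.intervalIntegrable_id.const_mul _)) hsecant
  rw [intervalIntegral.integral_const_add_mul_id, intervalIntegral.integral_const_mul] at hmono
  exact hmono.trans_eq (by ring)

theorem sSup_image_abs_eq_of_isMaxOn {ι : Type*} {s : Set ι} {f : ι → ℝ} {a : ι} (ha : a ∈ s)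
    (hmax : IsMaxOn f s a) (hf : ∀ x ∈ s, 0 ≤ f x) : sSup ((fun x => |f x|) '' s) = f a := by
  refine IsGreatest.csSup_eq ⟨⟨a, ha, abs_of_nonneg (hf a ha)⟩, ?_⟩
  rintro _ ⟨x, hx, rfl⟩
  exact (abs_of_nonneg (hf x hx)).trans_le (hmax hx)

namespace ThreePointBVP

variable {T η α β : ℝ} {u : ℝ → ℝ}

theorem succ_mul_lt_of_lt_div (hα : 0 < α) (hη : 0 < η) (hηT : η < T)
    (hβ : β < (2 * T - α * η ^ 2) / (α * η ^ 2 - 2 * η + 2 * T)) :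
    (β + 1) * (α * η ^ 2 - 2 * η + 2 * T) < 4 * T - 2 * η := by
  have hpos : 0 < α * η ^ 2 - 2 * η + 2 * T := by nlinarith [mul_pos hα (pow_pos hη 2)]
  nlinarith [(lt_div_iff₀ hpos).1 hβ]

theorem mul_apply_le_two_mul_apply (hconc : ConcaveOn ℝ (Icc 0 η) u)
    (hint : IntervalIntegrable u volume 0 η) (hα : 0 ≤ α) (hη : 0 ≤ η)
    (hbc1 : u 0 = β * u η) (hbc2 : u T = α * ∫ s in (0:ℝ)..η, u s) :
    α * η * (β + 1) * u η ≤ 2 * u T := by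
  have h := mul_le_mul_of_nonneg_left (hconc.sub_mul_add_div_two_le_integral hη hint) hα
  rw [hbc2]
  rw [sub_zero, hbc1] at h
  linarith

theorem apply_nonneg (hconc : ConcaveOn ℝ (Icc 0 T) u)
    (hint : IntervalIntegrable u volume 0 η) (hα : 0 < α) (hη : 0 < η) (hηT : η < T)
    (hβ : 0 ≤ β) (hparam : (β + 1) * (α * η ^ 2 - 2 * η + 2 * T) < 4 * T - 2 * η)
    (hbc1 : u 0 = β * u η) (hbc2 : u T = α * ∫ s in (0:ℝ)..η, u s)
    (hlow : α * η * (β + 1) * u η ≤ 2 * u T) :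
    ∀ t ∈ Icc 0 T, 0 ≤ u t := by
  have hupp : (2 * T - 2 * η + α * η ^ 2) * u T ≤ α * η * (2 * T - η) * u η := by
    have h := mul_le_mul_of_nonneg_left (hconc.sub_mul_integral_le hη.le hηT.le hint) hα.le
    rw [sub_zero, zero_add] at h
    nlinarith
  have huη : 0 ≤ u η := by
    have hpos : 0 < 2 * T - 2 * η + α * η ^ 2 := by nlinarith [mul_pos hα (pow_pos hη 2)]
    have h : 0 ≤ α * η * u η * (4 * T - 2 * η - (β + 1) * (α * η ^ 2 - 2 * η + 2 * T)) := by
      nlinarith [mul_le_mul_of_nonneg_left hlow hpos.le]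
    exact nonneg_of_mul_nonneg_right (nonneg_of_mul_nonneg_left h (by linarith)) (mul_pos hα hη)
  have hu0 : 0 ≤ u 0 := hbc1 ▸ mul_nonneg hβ huη
  have huT : 0 ≤ u T := by nlinarith [mul_nonneg (mul_nonneg hα.le hη.le) huη]
  intro t ht
  exact (le_min hu0 huT).trans (hconc.min_le_of_mem_Icc (left_mem_Icc.2 (hη.trans hηT).le)
    (right_mem_Icc.2 (hη.trans hηT).le) ht)

theorem mul_apply_le_of_le (hconc : ConcaveOn ℝ (Icc 0 T) u) (hη : 0 ≤ η) {σ : ℝ}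
    (hησ : η ≤ σ) (hσT : σ ≤ T) (hu0 : 0 ≤ u 0) (huη : 0 ≤ u η) : η * u σ ≤ T * u η := by
  have h := hconc.sub_mul_add_sub_mul_le ⟨le_rfl, (hη.trans hησ).trans hσT⟩
    ⟨hη.trans hησ, hσT⟩ hη hησ
  nlinarith [mul_nonneg (sub_nonneg.2 hησ) hu0, mul_le_mul_of_nonneg_right hσT huη]

theorem apply_le_and_mul_add_mul_le_of_le (hconc : ConcaveOn ℝ (Icc 0 T) u) {σ : ℝ}
    (hσ : 0 ≤ σ) (hση : σ ≤ η) (hηT : η < T) (hmax : u T ≤ u σ) :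
    u T ≤ u η ∧ (T - η) * u σ + η * u T ≤ T * u η := by
  have h := hconc.sub_mul_add_sub_mul_le ⟨hσ, hση.trans hηT.le⟩
    ⟨hσ.trans (hση.trans hηT.le), le_rfl⟩ hση hηT.le
  have hrq : u T ≤ u η := by
    refine le_of_mul_le_mul_left ?_ (sub_pos.2 (hση.trans_lt hηT))
    nlinarith [mul_le_mul_of_nonneg_left hmax (sub_nonneg.2 hηT.le)]
  exact ⟨hrq, by nlinarith [mul_le_mul_of_nonneg_left hrq hσ]⟩

noncomputable def gamma (T η α β : ℝ) : ℝ :=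
  min (η / T) (min (α * (β + 1) * η ^ 2 / (2 * T))
    (α * (β + 1) * η * (T - η) / (2 * T - α * (β + 1) * η ^ 2)))

theorem gamma_mul_le_min (hconc : ConcaveOn ℝ (Icc 0 T) u) (hα : 0 < α) (hη : 0 < η)
    (hηT : η < T) (hβ : 0 ≤ β)
    (hparam : (β + 1) * (α * η ^ 2 - 2 * η + 2 * T) < 4 * T - 2 * η)
    (hnn : ∀ t ∈ Icc 0 T, 0 ≤ u t) (hlow : α * η * (β + 1) * u η ≤ 2 * u T) {σ : ℝ}
    (hσ : σ ∈ Icc 0 T) (hmax : IsMaxOn u (Icc 0 T) σ) :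
    gamma T η α β * u σ ≤ min (u η) (u T) := by
  have hT : 0 < T := hη.trans hηT
  have hM : 0 ≤ u σ := hnn σ hσ
  have hu0 : 0 ≤ u 0 := hnn 0 (left_mem_Icc.2 hT.le)
  have huη : 0 ≤ u η := hnn η ⟨hη.le, hηT.le⟩
  have hαβη : 0 ≤ α * η * (β + 1) := by positivity
  rcases le_total η σ with hησ | hση
  · have h := mul_apply_le_of_le hconc hη.le hησ hσ.2 hu0 huη
    have hq : η / T * u σ ≤ u η := by
      rw [div_mul_eq_mul_div, div_le_iff₀ hT]
      linarith
    have hr : α * (β + 1) * η ^ 2 / (2 * T) * u σ ≤ u T := by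
      rw [div_mul_eq_mul_div, div_le_iff₀ (by positivity)]
      nlinarith [mul_le_mul_of_nonneg_left h hαβη, mul_le_mul_of_nonneg_right hlow hT.le]
    exact le_min ((mul_le_mul_of_nonneg_right (min_le_left _ _) hM).trans hq)
      ((mul_le_mul_of_nonneg_right ((min_le_right _ _).trans (min_le_left _ _)) hM).trans hr)
  · obtain ⟨hrq, h⟩ :=
      apply_le_and_mul_add_mul_le_of_le hconc hσ.1 hση hηT (hmax (right_mem_Icc.2 hT.le))
    have hD : 0 < 2 * T - α * (β + 1) * η ^ 2 := by
      nlinarith [mul_nonneg hβ (sub_nonneg.2 hηT.le)]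
    have hr : α * (β + 1) * η * (T - η) / (2 * T - α * (β + 1) * η ^ 2) * u σ ≤ u T := by
      rw [div_mul_eq_mul_div, div_le_iff₀ hD]
      nlinarith [mul_le_mul_of_nonneg_left h hαβη, mul_le_mul_of_nonneg_right hlow hT.le]
    have hγr : gamma T η α β * u σ ≤ u T :=
      (mul_le_mul_of_nonneg_right ((min_le_right _ _).trans (min_le_right _ _)) hM).trans hr
    exact le_min (hγr.trans hrq) hγr

end ThreePointBVP

theorem stmt_4_general (T η α β γ : ℝ) (hT : 0 < T) (hη0 : 0 < η) (hηT : η < T)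
    (hα : 0 < α)
    (hβ : 0 ≤ β) (hβ2 : β < (2 * T - α * η ^ 2) / (α * η ^ 2 - 2 * η + 2 * T))
    (hγ : γ = min (η / T) (min (α * (β + 1) * η ^ 2 / (2 * T))
      (α * (β + 1) * η * (T - η) / (2 * T - α * (β + 1) * η ^ 2))))
    (y : ℝ → ℝ)
    (hynn : ∀ t ∈ Set.Icc (0:ℝ) T, 0 ≤ y t)
    (u u' u'' : ℝ → ℝ)
    (hd1 : ∀ t ∈ Set.Icc (0:ℝ) T, HasDerivWithinAt u (u' t) (Set.Icc 0 T) t)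
    (hd2 : ∀ t ∈ Set.Icc (0:ℝ) T, HasDerivWithinAt u' (u'' t) (Set.Icc 0 T) t)
    (hode : ∀ t ∈ Set.Ioo (0:ℝ) T, u'' t + y t = 0)
    (hbc1 : u 0 = β * u η)
    (hbc2 : u T = α * ∫ s in (0:ℝ)..η, u s) :
    ∀ t ∈ Set.Icc η T, γ * sSup ((fun s => |u s|) '' Set.Icc (0:ℝ) T) ≤ u t := by
  have hconc : ConcaveOn ℝ (Icc 0 T) u :=
    concaveOn_Icc_of_hasDerivWithinAt2_nonpos hd1 (fun t ht => hd2 t (Ioo_subset_Icc_self ht))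
      fun t ht => by linarith [hode t ht, hynn t (Ioo_subset_Icc_self ht)]
  have hcont : ContinuousOn u (Icc 0 T) := fun t ht => (hd1 t ht).continuousWithinAt
  have hint : IntervalIntegrable u volume 0 η :=
    (hcont.mono (Icc_subset_Icc_right hηT.le)).intervalIntegrable_of_Icc hη0.le
  have hparam := ThreePointBVP.succ_mul_lt_of_lt_div hα hη0 hηT hβ2
  have hlow := ThreePointBVP.mul_apply_le_two_mul_apply
    (hconc.subset (Icc_subset_Icc_right hηT.le) (convex_Icc _ _)) hint hα.le hη0.le hbc1 hbc2
  have hnn := ThreePointBVP.apply_nonneg hconc hint hα hη0 hηT hβ hparam hbc1 hbc2 hlow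
  obtain ⟨σ, hσ, hmax⟩ := isCompact_Icc.exists_isMaxOn (nonempty_Icc.2 hT.le) hcont
  intro t ht
  rw [sSup_image_abs_eq_of_isMaxOn hσ hmax hnn, hγ]
  exact (ThreePointBVP.gamma_mul_le_min hconc hα hη0 hηT hβ hparam hnn hlow hσ hmax).trans
    (hconc.min_le_of_mem_Icc ⟨hη0.le, hηT.le⟩ (right_mem_Icc.2 hT.le) ht)

theorem stmt_4 (T η α β γ : ℝ) (hT : 0 < T) (hη0 : 0 < η) (hηT : η < T)
    (hα : 0 < α) (hα2 : α < 2 * T / η ^ 2)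
    (hβ : 0 ≤ β) (hβ2 : β < (2 * T - α * η ^ 2) / (α * η ^ 2 - 2 * η + 2 * T))
    (hγ : γ = min (η / T) (min (α * (β + 1) * η ^ 2 / (2 * T))
      (α * (β + 1) * η * (T - η) / (2 * T - α * (β + 1) * η ^ 2))))
    (y : ℝ → ℝ) (hy : ContinuousOn y (Set.Icc 0 T))
    (hynn : ∀ t ∈ Set.Icc (0:ℝ) T, 0 ≤ y t)
    (u u' u'' : ℝ → ℝ)
    (hd1 : ∀ t ∈ Set.Icc (0:ℝ) T, HasDerivWithinAt u (u' t) (Set.Icc 0 T) t)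
    (hd2 : ∀ t ∈ Set.Icc (0:ℝ) T, HasDerivWithinAt u' (u'' t) (Set.Icc 0 T) t)
    (hc : ContinuousOn u'' (Set.Icc 0 T))
    (hode : ∀ t ∈ Set.Ioo (0:ℝ) T, u'' t + y t = 0)
    (hbc1 : u 0 = β * u η)
    (hbc2 : u T = α * ∫ s in (0:ℝ)..η, u s) :
    ∀ t ∈ Set.Icc η T, γ * sSup ((fun s => |u s|) '' Set.Icc (0:ℝ) T) ≤ u t :=
  stmt_4_general T η α β γ hT hη0 hηT hα hβ hβ2 hγ y hynn u u' u'' hd1 hd2 hode hbc1 hbc2
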